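/- Let h be analytic in a closed disk of radius r > 0 centered at z₀ with h(z₀) ≠ 0. Then there exist r₀ ∈ (0, r] and ε₀ > 0 such that for each ε with 0 < ε < ε₀, the equation (z - z₀)² = ε·h(z) has precisely two distinct solutions in D(z₀, r₀), each of the form z = z₀ ± √ε·√(h(z₀)) + O(ε). -/

import Mathlib

/-!
Near `z₀`, `h` has an analytic square root `g` with `g z₀ = s`, so with `δ = √ε` the equation
`(z - z₀)² = ε h z` splits into the two fixed-point equations `z = z₀ ± δ g z`. Since `g` is
Lipschitz near `z₀`, for small `ε` both right-hand sides are contractions of a small closed disk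
into its interior, so each equation has exactly one solution there. The two solutions differ because
a common one would force `g z = 0`, hence `z = z₀` and `s = 0`; and
`z - (z₀ ± δ s) = ±δ (g z - g z₀)` with `‖z - z₀‖ = O(δ)` gives the `O(ε)` error.
-/

open Metric Set Filter Topology Function
open scoped NNReal

theorem LipschitzOnWith.exists_isFixedPt_unique {α : Type*} [MetricSpace α] {f : α → α}
    {s : Set α} {K : ℝ≥0} (hf : LipschitzOnWith K f s) (hK : K < 1) (hs : IsComplete s)
    (hfs : MapsTo f s s) (hne : s.Nonempty) :
    ∃ x ∈ s, IsFixedPt f x ∧ ∀ y ∈ s, IsFixedPt f y → y = x := by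
  have hc : ContractingWith K (hfs.restrict f s s) := ⟨hK, hf.mapsToRestrict hfs⟩
  obtain ⟨x₀, hx₀⟩ := hne
  obtain ⟨x, hx, hfx, -⟩ := hc.exists_fixedPoint' hs hfs hx₀ (edist_ne_top _ _)
  refine ⟨x, hx, hfx, fun y hy hfy => ?_⟩
  exact congrArg Subtype.val <|
    hc.fixedPoint_unique' (x := ⟨y, hy⟩) (y := ⟨x, hx⟩) (Subtype.ext hfy) (Subtype.ext hfx)

section SmallPerturbation

variable {𝕜 E : Type*} [NontriviallyNormedField 𝕜] [NormedAddCommGroup E] [NormedSpace 𝕜 E]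
  {g : E → E} {c : E} {ρ : ℝ} {L : ℝ≥0}

theorem LipschitzOnWith.norm_le_of_mem_closedBall (hg : LipschitzOnWith L g (closedBall c ρ))
    {z : E} (hz : z ∈ closedBall c ρ) : ‖g z‖ ≤ ‖g c‖ + L * ρ := by
  have hc : c ∈ closedBall c ρ := mem_closedBall_self (dist_nonneg.trans hz)
  calc ‖g z‖ ≤ ‖g c‖ + ‖g z - g c‖ := norm_le_norm_add_norm_sub' _ _
    _ ≤ ‖g c‖ + L * dist z c := by
        gcongr
        exact dist_eq_norm (g z) (g c) ▸ hg.dist_le_mul z hz c hc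
    _ ≤ ‖g c‖ + L * ρ := by gcongr; exact hz

theorem exists_eq_add_smul_of_lipschitzOnWith [CompleteSpace E]
    (hg : LipschitzOnWith L g (closedBall c ρ)) {w : 𝕜} (hwL : ‖w‖ * L < 1)
    (hwρ : ‖w‖ * (‖g c‖ + L * ρ) < ρ) :
    ∃ z ∈ ball c ρ, z = c + w • g z ∧ (∀ y ∈ closedBall c ρ, y = c + w • g y → y = z) ∧
      ‖z - (c + w • g c)‖ ≤ ‖w‖ ^ 2 * L * (‖g c‖ + L * ρ) := by
  have hρ : 0 ≤ ρ := by nlinarith [norm_nonneg w, norm_nonneg (g c), L.2]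
  set Φ : E → E := fun z => c + w • g z
  have hΦc : ∀ z ∈ closedBall c ρ, dist (Φ z) c ≤ ‖w‖ * (‖g c‖ + L * ρ) := fun z hz => by
    rw [dist_eq_norm, add_sub_cancel_left, norm_smul]
    exact mul_le_mul_of_nonneg_left (hg.norm_le_of_mem_closedBall hz) (norm_nonneg w)
  have hΦball : MapsTo Φ (closedBall c ρ) (ball c ρ) := fun z hz => (hΦc z hz).trans_lt hwρ
  have hΦlip : LipschitzOnWith (‖w‖₊ * L) Φ (closedBall c ρ) := by
    refine LipschitzOnWith.of_dist_le_mul fun a ha b hb => ?_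
    rw [dist_eq_norm, add_sub_add_left_eq_sub, ← smul_sub, norm_smul, NNReal.coe_mul,
      coe_nnnorm, mul_assoc, ← dist_eq_norm]
    exact mul_le_mul_of_nonneg_left (hg.dist_le_mul a ha b hb) (norm_nonneg w)
  obtain ⟨z, hz, hΦz, huniq⟩ := hΦlip.exists_isFixedPt_unique (by exact_mod_cast hwL)
    isClosed_closedBall.isComplete (hΦball.mono_right ball_subset_closedBall)
    ⟨c, mem_closedBall_self hρ⟩
  refine ⟨z, hΦz ▸ hΦball hz, hΦz.symm, fun y hy hΦy => huniq y hy hΦy.symm, ?_⟩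
  have hzc : dist z c ≤ ‖w‖ * (‖g c‖ + L * ρ) := hΦz ▸ hΦc z hz
  have hzs : z - (c + w • g c) = w • (g z - g c) := by
    conv_lhs => rw [← hΦz.eq]
    simp only [Φ, smul_sub, add_sub_add_left_eq_sub]
  calc ‖z - (c + w • g c)‖ = ‖w‖ * dist (g z) (g c) := by rw [hzs, norm_smul, dist_eq_norm]
    _ ≤ ‖w‖ * (L * (‖w‖ * (‖g c‖ + L * ρ))) := by
        gcongr
        exact (hg.dist_le_mul z hz c (mem_closedBall_self hρ)).trans
          (mul_le_mul_of_nonneg_left hzc L.2)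
    _ = ‖w‖ ^ 2 * L * (‖g c‖ + L * ρ) := by ring

end SmallPerturbation

theorem AnalyticAt.exists_sq_eq {h : ℂ → ℂ} {z₀ s : ℂ} (hh : AnalyticAt ℂ h z₀)
    (hne : h z₀ ≠ 0) (hs : s ^ 2 = h z₀) :
    ∃ g : ℂ → ℂ, AnalyticAt ℂ g z₀ ∧ g z₀ = s ∧ ∀ᶠ z in 𝓝 z₀, g z ^ 2 = h z := by
  refine ⟨fun z => s * Complex.exp (Complex.log (h z / h z₀) / 2), ?_, by simp [hne], ?_⟩
  · have hlog := (hh.div_const (c := h z₀)).clog (by simp [hne, Complex.one_mem_slitPlane])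
    exact analyticAt_const.mul (hlog.div_const.cexp')
  · filter_upwards [hh.continuousAt.eventually_ne hne] with z hz
    rw [mul_pow, ← Complex.exp_nat_mul, hs]
    push_cast
    rw [mul_div_cancel₀ _ two_ne_zero, Complex.exp_log (div_ne_zero hz hne), mul_div_cancel₀ _ hne]

theorem eventually_sqrt_mul_lt {a b : ℝ} (hb : 0 < b) :
    ∀ᶠ ε in 𝓝[>] (0 : ℝ), √ε * a < b := by
  have h : Tendsto (fun ε : ℝ => √ε * a) (𝓝 0) (𝓝 0) := by
    simpa using (Real.continuous_sqrt.tendsto 0).mul_const a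
  exact nhdsWithin_le_nhds (h.eventually_lt_const hb)

theorem exists_two_solutions_sub_sq_eq_mul {g h : ℂ → ℂ} {z₀ : ℂ} {ρ : ℝ} {L : ℝ≥0}
    (hg : LipschitzOnWith L g (closedBall z₀ ρ)) (hgh : ∀ z ∈ closedBall z₀ ρ, g z ^ 2 = h z)
    (hg₀ : g z₀ ≠ 0) {ε : ℝ} (hε : 0 < ε) (hεL : √ε * L < 1)
    (hερ : √ε * (‖g z₀‖ + L * ρ) < ρ) :
    ∃ z₁ z₂ : ℂ, z₁ ≠ z₂ ∧
      (z₁ ∈ ball z₀ ρ ∧ (z₁ - z₀) ^ 2 = (ε : ℂ) * h z₁) ∧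
      (z₂ ∈ ball z₀ ρ ∧ (z₂ - z₀) ^ 2 = (ε : ℂ) * h z₂) ∧
      (∀ z ∈ ball z₀ ρ, (z - z₀) ^ 2 = (ε : ℂ) * h z → z = z₁ ∨ z = z₂) ∧
      ‖z₁ - (z₀ + (√ε : ℂ) * g z₀)‖ ≤ L * (‖g z₀‖ + L * ρ) * ε ∧
      ‖z₂ - (z₀ - (√ε : ℂ) * g z₀)‖ ≤ L * (‖g z₀‖ + L * ρ) * ε := by
  set δ : ℂ := (√ε : ℂ)
  have hδ : ‖δ‖ = √ε := by simp [δ, Real.sqrt_nonneg]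
  have hδneg : ‖-δ‖ = √ε := by rw [norm_neg, hδ]
  have hδsq : ‖δ‖ ^ 2 = ε := by rw [hδ, Real.sq_sqrt hε.le]
  have hsolve : ∀ z ∈ closedBall z₀ ρ,
      (z - z₀) ^ 2 = ε * h z ↔ z = z₀ + δ • g z ∨ z = z₀ + (-δ) • g z := by
    intro z hz
    have : (ε : ℂ) * h z = (δ * g z) ^ 2 := by
      rw [mul_pow, hgh z hz, ← Complex.ofReal_pow, Real.sq_sqrt hε.le]
    rw [this, sq_eq_sq_iff_eq_or_eq_neg, smul_eq_mul, smul_eq_mul, neg_mul,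
      ← sub_eq_iff_eq_add', ← sub_eq_iff_eq_add']
  obtain ⟨z₁, hz₁, hz₁eq, huniq₁, herr₁⟩ :=
    exists_eq_add_smul_of_lipschitzOnWith hg (w := δ) (by rwa [hδ]) (by rwa [hδ])
  obtain ⟨z₂, hz₂, hz₂eq, huniq₂, herr₂⟩ :=
    exists_eq_add_smul_of_lipschitzOnWith hg (w := -δ) (by rwa [hδneg]) (by rwa [hδneg])
  refine ⟨z₁, z₂, ?_, ⟨hz₁, (hsolve z₁ (ball_subset_closedBall hz₁)).2 (.inl hz₁eq)⟩,
    ⟨hz₂, (hsolve z₂ (ball_subset_closedBall hz₂)).2 (.inr hz₂eq)⟩,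
    fun z hz hsol => ((hsolve z (ball_subset_closedBall hz)).1 hsol).imp
      (huniq₁ z (ball_subset_closedBall hz)) (huniq₂ z (ball_subset_closedBall hz)), ?_, ?_⟩
  · rintro rfl
    have hδ₀ : δ ≠ 0 := norm_ne_zero_iff.1 (by rw [hδ]; positivity)
    have hgz : g z₁ = 0 := by
      rw [smul_eq_mul] at hz₁eq hz₂eq
      have : δ * g z₁ = 0 := by linear_combination (hz₂eq - hz₁eq) / 2
      exact (mul_eq_zero.1 this).resolve_left hδ₀
    rw [hgz, smul_zero, add_zero] at hz₁eq
    exact hg₀ (hz₁eq ▸ hgz)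
  · simpa [hδsq, mul_comm, mul_left_comm, mul_assoc] using herr₁
  · simpa [hδsq, ← sub_eq_add_neg, mul_comm, mul_left_comm, mul_assoc] using herr₂

/-- If `h` is analytic on the closed disk of radius `r > 0` centered at `z₀` and
`h z₀ ≠ 0`, then there are `r₀ ∈ (0, r]`, `ε₀ > 0` and a constant `C` such that for
every `0 < ε < ε₀` the equation `(z - z₀)² = ε h(z)` has precisely two distinct
solutions in `D(z₀, r₀)`, of the form `z₀ ± √ε √(h z₀) + O(ε)` (where `s` is a
fixed branch of the square root of `h z₀`). -/
theorem two_solutions_of_quadratic_perturbation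
    (z₀ : ℂ) (r : ℝ) (hr : 0 < r) (h : ℂ → ℂ)
    (hh : DifferentiableOn ℂ h (Metric.closedBall z₀ r))
    (hne : h z₀ ≠ 0) (s : ℂ) (hs : s ^ 2 = h z₀) :
    ∃ r₀ : ℝ, 0 < r₀ ∧ r₀ ≤ r ∧ ∃ ε₀ > (0 : ℝ), ∃ C : ℝ,
      ∀ ε : ℝ, 0 < ε → ε < ε₀ →
        ∃ z₁ z₂ : ℂ, z₁ ≠ z₂ ∧
          (z₁ ∈ Metric.ball z₀ r₀ ∧ (z₁ - z₀) ^ 2 = (ε : ℂ) * h z₁) ∧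
          (z₂ ∈ Metric.ball z₀ r₀ ∧ (z₂ - z₀) ^ 2 = (ε : ℂ) * h z₂) ∧
          (∀ z : ℂ, z ∈ Metric.ball z₀ r₀ → (z - z₀) ^ 2 = (ε : ℂ) * h z →
            z = z₁ ∨ z = z₂) ∧
          ‖z₁ - (z₀ + (Real.sqrt ε : ℂ) * s)‖ ≤ C * ε ∧
          ‖z₂ - (z₀ - (Real.sqrt ε : ℂ) * s)‖ ≤ C * ε := by
  obtain ⟨g, hg, rfl, hgh⟩ :=
    (hh.analyticAt (closedBall_mem_nhds z₀ hr)).exists_sq_eq hne hs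
  obtain ⟨L, t, ht, hgL⟩ := hg.contDiffAt.exists_lipschitzOnWith
  obtain ⟨ρ, hρ, hρt⟩ := nhds_basis_closedBall.mem_iff.1 (inter_mem ht hgh)
  set r₀ := min ρ r
  have hr₀ : closedBall z₀ r₀ ⊆ t ∩ {z | g z ^ 2 = h z} :=
    (closedBall_subset_closedBall (min_le_left ρ r)).trans hρt
  have hs₀ : g z₀ ≠ 0 := fun h0 => hne (by rw [← hs, h0, zero_pow two_ne_zero])
  obtain ⟨ε₀, hε₀, hsmall⟩ := (nhdsGT_basis (0 : ℝ)).eventually_iff.1 <|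
    (eventually_sqrt_mul_lt (a := L) one_pos).and
      (eventually_sqrt_mul_lt (a := ‖g z₀‖ + L * r₀) (lt_min hρ hr))
  exact ⟨r₀, lt_min hρ hr, min_le_right ρ r, ε₀, hε₀, L * (‖g z₀‖ + L * r₀),
    fun ε hε hεε₀ => exists_two_solutions_sub_sq_eq_mul (hgL.mono fun z hz => (hr₀ hz).1)
      (fun z hz => (hr₀ hz).2) hs₀ hε (hsmall ⟨hε, hεε₀⟩).1 (hsmall ⟨hε, hεε₀⟩).2⟩
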